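/- arXiv:2303.05158 — 3 statements merged into one kernel-verified Lean document; each statement's English description precedes it below -/
import Mathlib

section
/- Let f : ℝ^n × ℝ^m → ℝ^n be a smooth submersion and let F = (F_x, F_u) be a flat parametrization of f of order r ≥ 1 which is of minimal order, i.e., f admits no flat parametrization of order r' < r. Then F_u depends nontrivially on the highest shift y_r: it is not the case that the partial derivative of F_u with respect to its last ℝ^m-block vanishes identically on (ℝ^m)^{r+1}. -/
/-- A flat parametrization of order `r` of the discrete-time system `x₊ = f (x, u)`:
a smooth submersion `F = (Fx, Fu) : (ℝᵐ)^{r+1} → ℝⁿ × ℝᵐ` such that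
`Fx (y₁, …, y_{r+1}) = f (Fx (y₀, …, y_r), Fu (y₀, …, y_r))` holds identically. -/
def IsFlatParametrization (n m : ℕ) (f : (Fin n → ℝ) × (Fin m → ℝ) → Fin n → ℝ) (r : ℕ)
    (F : (Fin (r + 1) → Fin m → ℝ) → (Fin n → ℝ) × (Fin m → ℝ)) : Prop :=
  ContDiff ℝ (⊤ : ℕ∞) F ∧
  (∀ y : Fin (r + 1) → Fin m → ℝ, Function.Surjective ⇑(fderiv ℝ F y)) ∧
  (∀ y : Fin (r + 2) → Fin m → ℝ,
    (F (fun i => y i.succ)).1 = f (F (fun i => y i.castSucc)))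

/-!
If `∂F_u/∂y_r` vanished identically, `F_u` would not depend on `y_r` (the fibres of the last block
are convex). Neither does `F_x`, since the flatness identity expresses `F_x (y₁, …, y_{r+1})`
through `y₀, …, y_r` alone. So `F = F' ∘ init` with `F' z := F (z, 0)`; then `dF'` has the same
image as `dF`, and `F'` is a flat parametrization of order `r - 1`, contradicting minimality.
-/

open Function

namespace Fin

variable {α : Type*} {k : ℕ}

theorem init_cons (a : α) (z : Fin (k + 1) → α) :
    init (cons a z : Fin (k + 2) → α) = cons a (init z) := by
  conv_lhs => rw [← snoc_init_self z]
  rw [cons_snoc_eq_snoc_cons, init_snoc]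

theorem tail_snoc (z : Fin (k + 1) → α) (a : α) :
    tail (snoc z a : Fin (k + 2) → α) = snoc (tail z) a := by
  conv_lhs => rw [← cons_self_tail z]
  rw [← cons_snoc_eq_snoc_cons, tail_cons]

end Fin

theorem apply_eq_of_init_eq_of_tail_eq_init {α β : Type*} {k : ℕ}
    {G H : (Fin (k + 1) → α) → β} (h : ∀ y : Fin (k + 2) → α, G (Fin.tail y) = H (Fin.init y))
    {z z' : Fin (k + 1) → α} (hz : Fin.init z = Fin.init z') : G z = G z' := by
  have h₁ := h (Fin.cons (z 0) z)
  have h₂ := h (Fin.cons (z 0) z')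
  rw [Fin.tail_cons] at h₁ h₂
  rw [h₁, h₂, Fin.init_cons, Fin.init_cons, hz]

theorem apply_update_eq_of_fderiv_update_eq_zero {ι E G : Type*} [Fintype ι] [DecidableEq ι]
    [NormedAddCommGroup E] [NormedSpace ℝ E] [NormedAddCommGroup G] [NormedSpace ℝ G]
    {g : (ι → E) → G} (hg : Differentiable ℝ g) (i : ι)
    (h : ∀ y, fderiv ℝ (fun a => g (update y i a)) (y i) = 0) (y : ι → E) (a : E) :
    g (update y i a) = g y := by
  have hderiv : ∀ b, fderiv ℝ (fun a => g (update y i a)) b = 0 := fun b => by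
    simpa using h (update y i b)
  simpa using is_const_of_fderiv_eq_zero
    (hg.comp fun a => (hasFDerivAt_update y a).differentiableAt) hderiv a (y i)

theorem contDiff_finSnoc_const {𝕜 E : Type*} [NontriviallyNormedField 𝕜] [NormedAddCommGroup E]
    [NormedSpace 𝕜 E] {k : ℕ} {N : WithTop ℕ∞} (c : E) :
    ContDiff 𝕜 N (fun z : Fin k → E => (Fin.snoc z c : Fin (k + 1) → E)) := by
  refine contDiff_pi.2 fun i => ?_
  induction i using Fin.lastCases with
  | last => simpa using contDiff_const
  | cast j => simpa using contDiff_apply 𝕜 E j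

theorem surjective_fderiv_of_surjective_fderiv_comp {𝕜 E F G : Type*}
    [NontriviallyNormedField 𝕜] [NormedAddCommGroup E] [NormedSpace 𝕜 E]
    [NormedAddCommGroup F] [NormedSpace 𝕜 F] [NormedAddCommGroup G] [NormedSpace 𝕜 G]
    {g : F → G} {f : E → F} {x : E} (hg : DifferentiableAt 𝕜 g (f x))
    (hf : DifferentiableAt 𝕜 f x) (h : Surjective (fderiv 𝕜 (g ∘ f) x)) :
    Surjective (fderiv 𝕜 g (f x)) := by
  rw [fderiv_comp x hg hf] at h
  exact Surjective.of_comp h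

namespace IsFlatParametrization

variable {n m : ℕ} {f : (Fin n → ℝ) × (Fin m → ℝ) → Fin n → ℝ}

section

variable {r : ℕ} {F : (Fin (r + 1) → Fin m → ℝ) → (Fin n → ℝ) × (Fin m → ℝ)}

theorem fst_apply_tail (hF : IsFlatParametrization n m f r F) (y : Fin (r + 2) → Fin m → ℝ) :
    (F (Fin.tail y)).1 = f (F (Fin.init y)) :=
  hF.2.2 y

theorem fst_eq_of_init_eq (hF : IsFlatParametrization n m f r F)
    {z z' : Fin (r + 1) → Fin m → ℝ} (hz : Fin.init z = Fin.init z') : (F z).1 = (F z').1 :=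
  apply_eq_of_init_eq_of_tail_eq_init (G := fun z => (F z).1) (H := fun z => f (F z))
    hF.fst_apply_tail hz

end

theorem comp_snoc_zero {s : ℕ} {F : (Fin (s + 2) → Fin m → ℝ) → (Fin n → ℝ) × (Fin m → ℝ)}
    (hF : IsFlatParametrization n m f (s + 1) F)
    (hlast : ∀ y a, F (update y (Fin.last (s + 1)) a) = F y) :
    IsFlatParametrization n m f s (fun z => F (Fin.snoc z 0)) := by
  have hF_eq : ∀ y, F y = F (Fin.snoc (Fin.init y) 0) := fun y => by
    rw [← Fin.update_snoc_last, Fin.snoc_init_self, hlast]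
  have hsnoc : ContDiff ℝ (⊤ : ℕ∞)
      (fun z : Fin (s + 1) → Fin m → ℝ => (Fin.snoc z 0 : Fin (s + 2) → Fin m → ℝ)) :=
    contDiff_finSnoc_const 0
  have hinit : Differentiable ℝ
      (Fin.init : (Fin (s + 2) → Fin m → ℝ) → Fin (s + 1) → Fin m → ℝ) :=
    differentiable_pi.2 fun i => differentiable_apply _
  refine ⟨hF.1.comp hsnoc, fun z => ?_, fun y => ?_⟩
  · have h := hF.2.1 (Fin.snoc z 0)
    rw [show F = (fun z => F (Fin.snoc z 0)) ∘ Fin.init from funext hF_eq] at h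
    have h' := surjective_fderiv_of_surjective_fderiv_comp
      ((hF.1.comp hsnoc).differentiable (by simp) _) (hinit _) h
    rwa [Fin.init_snoc] at h'
  · have h := hF.fst_apply_tail (Fin.snoc y 0)
    rw [Fin.init_snoc, Fin.tail_snoc] at h
    rwa [hF_eq y] at h

end IsFlatParametrization

theorem flat_parametrization_minimal_order_Fu_depends_on_last_block_general
    (n m r : ℕ) (hr : 1 ≤ r)
    (f : (Fin n → ℝ) × (Fin m → ℝ) → Fin n → ℝ)
    (F : (Fin (r + 1) → Fin m → ℝ) → (Fin n → ℝ) × (Fin m → ℝ))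
    (hF : IsFlatParametrization n m f r F)
    (hmin : ∀ r' < r, ∀ F' : (Fin (r' + 1) → Fin m → ℝ) → (Fin n → ℝ) × (Fin m → ℝ),
      ¬ IsFlatParametrization n m f r' F') :
    ¬ (∀ y : Fin (r + 1) → Fin m → ℝ,
        fderiv ℝ (fun a => (F (Function.update y (Fin.last r) a)).2) (y (Fin.last r)) = 0) := by
  intro hFu
  obtain ⟨s, rfl⟩ : ∃ s, r = s + 1 := ⟨r - 1, by omega⟩
  have hlast : ∀ y a, F (update y (Fin.last (s + 1)) a) = F y := fun y a => Prod.ext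
    (hF.fst_eq_of_init_eq (Fin.init_update_last y a))
    (apply_update_eq_of_fderiv_update_eq_zero (hF.1.differentiable (by simp)).snd _ hFu y a)
  exact hmin s s.lt_succ_self _ (hF.comp_snoc_zero hlast)

/-- Let `f` be a smooth submersion and `F = (Fx, Fu)` a flat parametrization of `f` of minimal
order `r ≥ 1` (i.e. `f` admits no flat parametrization of order `r' < r`).  Then `Fu` depends
nontrivially on the highest shift `y_r`: it is not the case that the partial derivative of
`Fu` with respect to its last `ℝᵐ`-block vanishes identically. -/
theorem flat_parametrization_minimal_order_Fu_depends_on_last_block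
    (n m r : ℕ) (hr : 1 ≤ r)
    (f : (Fin n → ℝ) × (Fin m → ℝ) → Fin n → ℝ)
    (hf : ContDiff ℝ (⊤ : ℕ∞) f)
    (hsub : ∀ p : (Fin n → ℝ) × (Fin m → ℝ), Function.Surjective ⇑(fderiv ℝ f p))
    (F : (Fin (r + 1) → Fin m → ℝ) → (Fin n → ℝ) × (Fin m → ℝ))
    (hF : IsFlatParametrization n m f r F)
    (hmin : ∀ r' < r, ∀ F' : (Fin (r' + 1) → Fin m → ℝ) → (Fin n → ℝ) × (Fin m → ℝ),
      ¬ IsFlatParametrization n m f r' F') :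
    ¬ (∀ y : Fin (r + 1) → Fin m → ℝ,
        fderiv ℝ (fun a => (F (Function.update y (Fin.last r) a)).2) (y (Fin.last r)) = 0) :=
  flat_parametrization_minimal_order_Fu_depends_on_last_block_general n m r hr f F hF hmin
end

section
/- Define h : ℝ^5 → ℝ^5 by h(x̃) = ( x̃^2, x̃^4, x̃^5−x̃^3−1, x̃^1+1, x̃^5 ) (a diffeomorphism of ℝ^5 with inverse h^{-1}(x) = (x^4−1, x^1, x^5−x^3−1, x^2, x^5)), and the input transformation u^1 = v, u^2 = w − x̃^4. Then for all x̃ with x̃^4 ≠ −1 and all (v,w) ∈ ℝ^2, the example system satisfies the identity h^{-1}( f( h(x̃), (v, w−x̃^4) ) ) = ( (−x̃^2(v+1)+x̃^5(x̃^4+1))/(x̃^4+1), x̃^4(v+1), −x̃^1+x̃^4−1, v, w ); i.e., in the new coordinates the system splits into the pure shift subsystem x̃^5_+ = w and a remaining 4-dimensional subsystem with inputs v and x̃^5. -/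
/-- The example system `f (x, u) = (x²(u¹+1), u¹, x⁴+u²−1, x⁵+1−x¹(u¹+1)/(x²+1), u²+x²)`
(indices shifted down by one), defined on `{(x, u) : x² ≠ −1}`. -/
noncomputable def exampleSystem : (Fin 5 → ℝ) × (Fin 2 → ℝ) → Fin 5 → ℝ := fun p =>
  ![p.1 1 * (p.2 0 + 1),
    p.2 0,
    p.1 3 + p.2 1 - 1,
    p.1 4 + 1 - p.1 0 * (p.2 0 + 1) / (p.1 1 + 1),
    p.2 1 + p.1 1]

/-- The state transformation `h (x̃) = (x̃², x̃⁴, x̃⁵ − x̃³ − 1, x̃¹ + 1, x̃⁵)`. -/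
noncomputable def hMap (xt : Fin 5 → ℝ) : Fin 5 → ℝ :=
  ![xt 1, xt 3, xt 4 - xt 2 - 1, xt 0 + 1, xt 4]

/-- The inverse state transformation `h⁻¹ (x) = (x⁴ − 1, x¹, x⁵ − x³ − 1, x², x⁵)`. -/
noncomputable def hInv (x : Fin 5 → ℝ) : Fin 5 → ℝ :=
  ![x 3 - 1, x 0, x 4 - x 2 - 1, x 1, x 4]

theorem hInv_hMap (xt : Fin 5 → ℝ) : hInv (hMap xt) = xt := by
  ext i; fin_cases i <;> simp [hInv, hMap]; ring

theorem hMap_hInv (x : Fin 5 → ℝ) : hMap (hInv x) = x := by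
  ext i; fin_cases i <;> simp [hInv, hMap]; ring

theorem exampleSystem_hMap (xt : Fin 5 → ℝ) (v w : ℝ) :
    exampleSystem (hMap xt, ![v, w - xt 3]) =
      ![xt 3 * (v + 1), v, xt 0 + w - xt 3, xt 4 + 1 - xt 1 * (v + 1) / (xt 3 + 1), w] := by
  ext i; fin_cases i <;> simp [exampleSystem, hMap]; ring

theorem hInv_exampleSystem_hMap {xt : Fin 5 → ℝ} (hxt : xt 3 ≠ -1) (v w : ℝ) :
    hInv (exampleSystem (hMap xt, ![v, w - xt 3])) =
      ![(-(xt 1) * (v + 1) + xt 4 * (xt 3 + 1)) / (xt 3 + 1), xt 3 * (v + 1),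
        -(xt 0) + xt 3 - 1, v, w] := by
  have hden : xt 3 + 1 ≠ 0 := by contrapose! hxt; linarith
  rw [exampleSystem_hMap]
  ext i; fin_cases i <;> simp [hInv] <;> field_simp <;> ring

/-- `h` is a diffeomorphism of `ℝ⁵` with inverse `h⁻¹`, and with the input transformation
`u¹ = v`, `u² = w − x̃⁴` the example system satisfies, for all `x̃` with `x̃⁴ ≠ −1`,
`h⁻¹ (f (h x̃, (v, w − x̃⁴))) = ((−x̃²(v+1) + x̃⁵(x̃⁴+1))/(x̃⁴+1), x̃⁴(v+1), −x̃¹+x̃⁴−1, v, w)`: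
in the new coordinates the system splits into the pure shift subsystem `x̃⁵₊ = w` and a
remaining 4-dimensional subsystem with inputs `v` and `x̃⁵`. -/
theorem exampleSystem_split_normal_form :
    (∀ xt : Fin 5 → ℝ, hInv (hMap xt) = xt) ∧
    (∀ x : Fin 5 → ℝ, hMap (hInv x) = x) ∧
    (∀ xt : Fin 5 → ℝ, xt 3 ≠ -1 → ∀ v w : ℝ,
      hInv (exampleSystem (hMap xt, ![v, w - xt 3])) =
        ![(-(xt 1) * (v + 1) + xt 4 * (xt 3 + 1)) / (xt 3 + 1),
          xt 3 * (v + 1),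
          -(xt 0) + xt 3 - 1,
          v,
          w]) :=
  ⟨hInv_hMap, hMap_hInv, fun _ hxt v w => hInv_exampleSystem_hMap hxt v w⟩
end

section
/- The example system f : {(x,u) ∈ ℝ^5 × ℝ^2 : x^2 ≠ −1} → ℝ^5, f(x,u) = ( x^2(u^1+1), u^1, x^4+u^2−1, x^5+1−x^1(u^1+1)/(x^2+1), u^2+x^2 ), is flat with flat outputs y^1 = (x^2+1)/x^1 and y^2 = x^5 − x^3: there exist an integer r ≥ 1, a nonempty open set U ⊆ (ℝ^m)^{r+1} (with m = 2) and a smooth submersion F = (F_x, F_u) : U → ℝ^5 × ℝ^2 with F_x taking values in {x^2 ≠ −1, x^1 ≠ 0}, such that F_x(y_1, …, y_{r+1}) = f(F_x(y_0, …, y_r), F_u(y_0, …, y_r)) whenever both argument tuples lie in U, and moreover ( (F_x^2(y)+1)/F_x^1(y), F_x^5(y) − F_x^3(y) ) = y_0 for all y ∈ U. -/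
open Topology

section Calculus

variable {𝕜 E F : Type*} [NontriviallyNormedField 𝕜] [NormedAddCommGroup E] [NormedSpace 𝕜 E]
  [NormedAddCommGroup F] [NormedSpace 𝕜 F]

@[fun_prop]
theorem ContDiffOn.matrixVecCons {n : ℕ} {k : WithTop ℕ∞} {s : Set E} {f : E → F}
    {g : E → Fin n → F} (hf : ContDiffOn 𝕜 k f s) (hg : ContDiffOn 𝕜 k g s) :
    ContDiffOn 𝕜 k (fun x => Matrix.vecCons (f x) (g x)) s :=
  contDiffOn_pi.2 fun i => i.cases (by simpa using hf) fun j => by simpa using contDiffOn_pi.1 hg j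

@[fun_prop]
theorem DifferentiableAt.matrixVecCons {n : ℕ} {x : E} {f : E → F} {g : E → Fin n → F}
    (hf : DifferentiableAt 𝕜 f x) (hg : DifferentiableAt 𝕜 g x) :
    DifferentiableAt 𝕜 (fun x => Matrix.vecCons (f x) (g x)) x :=
  hf.finCons hg

theorem surjective_fderiv_of_rightInverse {f : E → F} {g : F → E} {x : E}
    (hf : DifferentiableAt 𝕜 f x) (hg : DifferentiableAt 𝕜 g (f x)) (hgf : g (f x) = x)
    (hfg : ∀ᶠ z in 𝓝 (f x), f (g z) = z) : Function.Surjective (fderiv 𝕜 f x) := by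
  have hf' : HasFDerivAt f (fderiv 𝕜 f x) (g (f x)) := by rw [hgf]; exact hf.hasFDerivAt
  have hcomp := hf'.comp (f x) hg.hasFDerivAt
  have hid : HasFDerivAt (f ∘ g) (ContinuousLinearMap.id 𝕜 F) (f x) :=
    (hasFDerivAt_id _).congr_of_eventuallyEq hfg
  intro w
  exact ⟨fderiv 𝕜 g (f x) w, congr($(hcomp.unique hid) w)⟩

end Calculus

theorem inv_add_one_ne_zero {K : Type*} [DivisionRing K] {a : K} (ha : a ≠ 0) (h : a + 1 ≠ 0) :
    a⁻¹ + 1 ≠ 0 := by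
  rw [inv_eq_one_div, div_add_one ha]
  exact div_ne_zero (by rwa [add_comm]) ha

noncomputable def exampleFx (y : Fin 4 → Fin 2 → ℝ) : Fin 5 → ℝ :=
  ![((y 1 0)⁻¹ + 1) / y 0 0,
    (y 1 0)⁻¹,
    (y 2 0)⁻¹ + ((y 2 0)⁻¹ + 1) / y 0 0 - y 2 1 - y 0 1,
    (y 1 0)⁻¹ + 1 - y 1 1,
    (y 2 0)⁻¹ + ((y 2 0)⁻¹ + 1) / y 0 0 - y 2 1]

noncomputable def exampleFu (y : Fin 4 → Fin 2 → ℝ) : Fin 2 → ℝ :=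
  ![(y 2 0)⁻¹,
    (y 3 0)⁻¹ + ((y 3 0)⁻¹ + 1) / y 1 0 - (y 1 0)⁻¹ - y 3 1]

def exampleDomain : Set (Fin 4 → Fin 2 → ℝ) :=
  {y | y 0 0 ≠ 0 ∧ y 1 0 ≠ 0 ∧ y 1 0 + 1 ≠ 0 ∧ y 2 0 ≠ 0 ∧ y 3 0 ≠ 0}

noncomputable def exampleSection (t : ℝ) (p : (Fin 5 → ℝ) × (Fin 2 → ℝ)) :
    Fin 4 → Fin 2 → ℝ :=
  ![![(p.1 1 + 1) / p.1 0, p.1 4 - p.1 2],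
    ![(p.1 1)⁻¹, p.1 1 - p.1 3 + 1],
    ![(p.2 0)⁻¹, p.2 0 + p.1 0 * (p.2 0 + 1) / (p.1 1 + 1) - p.1 4],
    ![t, (p.1 1 + 1) / t - p.2 1]]

def exampleSectionDomain : Set ((Fin 5 → ℝ) × (Fin 2 → ℝ)) :=
  {p | p.1 0 ≠ 0 ∧ p.1 1 ≠ 0 ∧ p.1 1 + 1 ≠ 0 ∧ p.2 0 ≠ 0}

theorem isOpen_exampleDomain : IsOpen exampleDomain := by
  simp only [exampleDomain, Set.ofPred_and]
  refine .inter ?_ (.inter ?_ (.inter ?_ (.inter ?_ ?_))) <;>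
    exact isOpen_ne_fun (by fun_prop) (by fun_prop)

theorem isOpen_exampleSectionDomain : IsOpen exampleSectionDomain := by
  simp only [exampleSectionDomain, Set.ofPred_and]
  refine .inter ?_ (.inter ?_ (.inter ?_ ?_)) <;>
    exact isOpen_ne_fun (by fun_prop) (by fun_prop)

theorem contDiffOn_exampleParam :
    ContDiffOn ℝ (⊤ : ℕ∞) (fun y => (exampleFx y, exampleFu y)) exampleDomain := by
  unfold exampleFx exampleFu
  fun_prop (disch := aesop (add simp exampleDomain))

theorem differentiableAt_exampleSection {t : ℝ} {p : (Fin 5 → ℝ) × (Fin 2 → ℝ)}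
    (hp : p ∈ exampleSectionDomain) : DifferentiableAt ℝ (exampleSection t) p := by
  obtain ⟨h0, h1, h1', hu⟩ := hp
  unfold exampleSection
  fun_prop (disch := assumption)

theorem exampleParam_mem {y : Fin 4 → Fin 2 → ℝ} (hy : y ∈ exampleDomain) :
    (exampleFx y, exampleFu y) ∈ exampleSectionDomain := by
  obtain ⟨h0, h1, h1', h2, -⟩ := hy
  have := inv_add_one_ne_zero h1 h1'
  refine ⟨?_, ?_, ?_, ?_⟩ <;> simp [exampleFx, exampleFu, *]

theorem exampleSection_exampleParam {y : Fin 4 → Fin 2 → ℝ} (hy : y ∈ exampleDomain) :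
    exampleSection (y 3 0) (exampleFx y, exampleFu y) = y := by
  obtain ⟨h0, h1, h1', h2, h3⟩ := hy
  -- `field_simp` rewrites `(y 1 0)⁻¹ + 1` as `(1 + y 1 0) / y 1 0` and needs this exact form
  have : 1 + y 1 0 ≠ 0 := by rwa [add_comm]
  ext i j
  fin_cases i <;> fin_cases j <;> simp [exampleSection, exampleFx, exampleFu] <;> field_simp <;> ring

theorem exampleParam_exampleSection {t : ℝ} {p : (Fin 5 → ℝ) × (Fin 2 → ℝ)}
    (ht : t ≠ 0) (hp : p ∈ exampleSectionDomain) :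
    (exampleFx (exampleSection t p), exampleFu (exampleSection t p)) = p := by
  obtain ⟨h0, h1, h1', hu⟩ := hp
  ext i <;> fin_cases i <;> simp [exampleSection, exampleFx, exampleFu] <;> field_simp <;> ring

theorem surjective_fderiv_exampleParam {y : Fin 4 → Fin 2 → ℝ} (hy : y ∈ exampleDomain) :
    Function.Surjective (fderiv ℝ (fun z => (exampleFx z, exampleFu z)) y) := by
  have hV := isOpen_exampleSectionDomain.mem_nhds (exampleParam_mem hy)
  refine surjective_fderiv_of_rightInverse
    ((contDiffOn_exampleParam.differentiableOn (by simp)).differentiableAt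
      (isOpen_exampleDomain.mem_nhds hy))
    (differentiableAt_exampleSection (mem_of_mem_nhds hV)) (exampleSection_exampleParam hy) ?_
  filter_upwards [hV] with p hp using exampleParam_exampleSection hy.2.2.2.2 hp

theorem exampleFx_succ {y : Fin 5 → Fin 2 → ℝ}
    (hy : (fun i : Fin 4 => y i.castSucc) ∈ exampleDomain) :
    exampleFx (fun i => y i.succ) =
      exampleSystem (exampleFx (fun i => y i.castSucc), exampleFu (fun i => y i.castSucc)) := by
  obtain ⟨h0, h1, h1', h2, -⟩ :
    y 0 0 ≠ 0 ∧ y 1 0 ≠ 0 ∧ y 1 0 + 1 ≠ 0 ∧ y 2 0 ≠ 0 ∧ y 3 0 ≠ 0 := hy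
  have : 1 + y 1 0 ≠ 0 := by rwa [add_comm]
  ext i
  fin_cases i <;> simp [exampleSystem, exampleFx, exampleFu] <;> field_simp <;> ring

theorem exampleFx_flatOutput {y : Fin 4 → Fin 2 → ℝ} (hy : y ∈ exampleDomain) :
    ![(exampleFx y 1 + 1) / exampleFx y 0, exampleFx y 4 - exampleFx y 2] = y 0 := by
  obtain ⟨h0, h1, h1', -, -⟩ := hy
  have : 1 + y 1 0 ≠ 0 := by rwa [add_comm]
  ext j
  fin_cases j
  · simp [exampleFx]
    field_simp
  · simp [exampleFx]

/-- The example system is flat with flat outputs `y¹ = (x²+1)/x¹` and `y² = x⁵ − x³`: there are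
`r ≥ 1`, a nonempty open `U ⊆ (ℝ²)^{r+1}` and a smooth submersion `F = (Fx, Fu) : U → ℝ⁵ × ℝ²`
with `Fx` valued in `{x² ≠ −1, x¹ ≠ 0}`, satisfying the flat-parametrization identity
`Fx (y₁, …, y_{r+1}) = f (Fx (y₀, …, y_r), Fu (y₀, …, y_r))` whenever both argument tuples
lie in `U`, and `((Fx² + 1)/Fx¹, Fx⁵ − Fx³) = y₀` on `U`. -/
theorem exampleSystem_is_flat :
    ∃ (r : ℕ), 1 ≤ r ∧
    ∃ U : Set (Fin (r + 1) → Fin 2 → ℝ), IsOpen U ∧ U.Nonempty ∧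
    ∃ (Fx : (Fin (r + 1) → Fin 2 → ℝ) → Fin 5 → ℝ)
      (Fu : (Fin (r + 1) → Fin 2 → ℝ) → Fin 2 → ℝ),
      ContDiffOn ℝ (⊤ : ℕ∞) (fun y => (Fx y, Fu y)) U ∧
      (∀ y ∈ U, Function.Surjective ⇑(fderiv ℝ (fun z => (Fx z, Fu z)) y)) ∧
      (∀ y ∈ U, Fx y 1 ≠ -1 ∧ Fx y 0 ≠ 0) ∧
      (∀ y : Fin (r + 2) → Fin 2 → ℝ,
        (fun i : Fin (r + 1) => y i.castSucc) ∈ U →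
        (fun i : Fin (r + 1) => y i.succ) ∈ U →
        Fx (fun i => y i.succ) =
          exampleSystem (Fx (fun i => y i.castSucc), Fu (fun i => y i.castSucc))) ∧
      (∀ y ∈ U, ![(Fx y 1 + 1) / Fx y 0, Fx y 4 - Fx y 2] = y 0) := by
  have hne : (fun _ _ => 1 : Fin 4 → Fin 2 → ℝ) ∈ exampleDomain := by norm_num [exampleDomain]
  refine ⟨3, by norm_num, exampleDomain, isOpen_exampleDomain, ⟨_, hne⟩,
    exampleFx, exampleFu, contDiffOn_exampleParam, fun y hy => surjective_fderiv_exampleParam hy,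
    fun y hy => ?_, fun y hy _ => exampleFx_succ hy, fun y hy => exampleFx_flatOutput hy⟩
  obtain ⟨h0, -, h1', -⟩ := exampleParam_mem hy
  exact ⟨fun h => h1' (by simp [h]), h0⟩
end
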